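/- Let (Ω,𝓕,ℙ) be an atomless probability space. Then there exist two families of measurable sets (A_t)_{0≤t≤1} and (B_t)_{0≤t≤1}, each increasing in t (A_s ⊆ A_t and B_s ⊆ B_t for s ≤ t), such that ℙ(A_t) = ℙ(B_t) = t for every t ∈ [0,1], and the σ-algebras 𝓐 := σ(A_t : 0 ≤ t ≤ 1) and 𝓑 := σ(B_t : 0 ≤ t ≤ 1) are independent. -/

import Mathlib

/-!
Atomlessness gives Sierpiński's intermediate value property, in particular a measurable bisection
of every measurable set. Bisecting every cell twice per level cuts `Ω` into `4 ^ n` cells of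
measure `4⁻¹ ^ n`, labelled by the dyadic grid of the unit square, each level refining the
previous one.
Let `A t` (resp. `B t`) be the union over `n` of the level-`n` cells whose first (resp. second)
coordinate lies below `⌊t 2ⁿ⌋`. Then `A s ∩ B t` is the increasing union of rectangles of
`⌊s 2ⁿ⌋ ⌊t 2ⁿ⌋` cells, so its measure is `s t`. Both families are chains, hence π-systems, and
independence of the generated σ-algebras follows.
-/

open MeasureTheory Filter Set
open scoped ENNReal Topology

theorem ENNReal.exists_forall_le_two_mul {ι : Type*} [Nonempty ι] {f : ι → ℝ≥0∞}
    (hf : ⨆ i, f i ≠ ∞) : ∃ i, ∀ j, f j ≤ 2 * f i := by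
  rcases eq_or_ne (⨆ i, f i) 0 with h0 | h0
  · exact ⟨Classical.arbitrary ι, fun j => by simp [(iSup_eq_zero.1 h0) j]⟩
  · obtain ⟨i, hi⟩ := lt_iSup_iff.1 (ENNReal.half_lt_self h0 hf)
    refine ⟨i, fun j => (le_iSup f j).trans ?_⟩
    rw [← ENNReal.div_le_iff' two_ne_zero ENNReal.ofNat_ne_top]
    exact hi.le

section

variable {α : Type*} [MeasurableSpace α] {μ : Measure α} [IsFiniteMeasure μ]

theorem exists_nearly_maximal_subset {S T : Set α} {r : ℝ≥0∞} (hT : μ T ≤ r) :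
    ∃ C ⊆ S \ T, MeasurableSet C ∧ μ T + μ C ≤ r ∧
      ∀ D ⊆ S \ T, MeasurableSet D → μ T + μ D ≤ r → μ D ≤ 2 * μ C := by
  let Admissible := {D // D ⊆ S \ T ∧ MeasurableSet D ∧ μ T + μ D ≤ r}
  have : Nonempty Admissible := ⟨⟨∅, empty_subset _, .empty, by simpa using hT⟩⟩
  have hbdd : ⨆ D : Admissible, μ D.1 ≠ ∞ :=
    ne_top_of_le_ne_top (measure_ne_top μ univ) (iSup_le fun D => measure_mono (subset_univ _))
  obtain ⟨⟨C, hC⟩, hmax⟩ := ENNReal.exists_forall_le_two_mul hbdd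
  exact ⟨C, hC.1, hC.2.1, hC.2.2, fun D hDS hD hDr => hmax ⟨D, hDS, hD, hDr⟩⟩

/-- Greedy exhaustion: keep adding to `T` a subset of `S \ T` of at least half the largest
measure that keeps `μ T ≤ r`. The added pieces are disjoint, so their measures tend to `0`, and a
set that still fits at the end fitted at every stage, so it is at most twice each of them. -/
theorem exists_saturated_subset (S : Set α) (r : ℝ≥0∞) :
    ∃ T ⊆ S, MeasurableSet T ∧ μ T ≤ r ∧
      ∀ D ⊆ S \ T, MeasurableSet D → μ T + μ D ≤ r → μ D = 0 := by
  have hstep : ∀ T : Set α, ∃ C, μ T ≤ r → C ⊆ S \ T ∧ MeasurableSet C ∧ μ T + μ C ≤ r ∧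
      ∀ D ⊆ S \ T, MeasurableSet D → μ T + μ D ≤ r → μ D ≤ 2 * μ C := fun T => by
    by_cases hT : μ T ≤ r
    · obtain ⟨C, hC⟩ := exists_nearly_maximal_subset (S := S) hT
      exact ⟨C, fun _ => hC⟩
    · exact ⟨∅, fun h => absurd h hT⟩
  choose C hC using hstep
  let T : ℕ → Set α := fun n => Nat.rec ∅ (fun _ T => T ∪ C T) n
  have hT : ∀ n, T n ⊆ S ∧ MeasurableSet (T n) ∧ μ (T n) ≤ r := by
    intro n
    induction n with
    | zero => simp [T]
    | succ n ih =>
      obtain ⟨hCS, hCm, hCr, -⟩ := hC (T n) ih.2.2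
      exact ⟨union_subset ih.1 (hCS.trans sdiff_subset), ih.2.1.union hCm,
        (measure_union_le _ _).trans hCr⟩
  have hsum : ∀ n, ∑ k ∈ Finset.range n, μ (C (T k)) = μ (T n) := by
    intro n
    induction n with
    | zero => simp [T]
    | succ n ih =>
      obtain ⟨hCS, hCm, -⟩ := hC (T n) (hT n).2.2
      rw [Finset.sum_range_succ, ih]
      exact (measure_union (disjoint_sdiff_right.mono_right hCS) hCm).symm
  have hC_lim : Tendsto (fun n => 2 * μ (C (T n))) atTop (𝓝 0) := by
    have hsum_fin : ∑' n, μ (C (T n)) ≠ ∞ := ne_top_of_le_ne_top (measure_ne_top μ univ) <|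
      ENNReal.tsum_le_of_sum_range_le fun n => (hsum n).trans_le (measure_mono (subset_univ _))
    simpa using ENNReal.Tendsto.const_mul (ENNReal.tendsto_atTop_zero_of_tsum_ne_top hsum_fin)
      (Or.inr ENNReal.ofNat_ne_top)
  have hmono : Monotone T := monotone_nat_of_le_succ fun n => subset_union_left
  have hUr : μ (⋃ n, T n) ≤ r := by
    rw [hmono.measure_iUnion]
    exact iSup_le fun n => (hT n).2.2
  refine ⟨⋃ n, T n, iUnion_subset fun n => (hT n).1, .iUnion fun n => (hT n).2.1, hUr, ?_⟩
  intro D hDS hD hDr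
  have hDle : ∀ n, μ D ≤ 2 * μ (C (T n)) := fun n =>
    (hC (T n) (hT n).2.2).2.2.2 D (hDS.trans (sdiff_subset_sdiff_right (subset_iUnion T n))) hD <|
      (add_le_add_left (measure_mono (subset_iUnion T n)) _).trans hDr
  exact le_zero_iff.1 (ge_of_tendsto' hC_lim hDle)

end

def Atomless {α : Type*} [MeasurableSpace α] (μ : Measure α) : Prop :=
  ∀ A : Set α, MeasurableSet A → 0 < μ A →
    ∃ B : Set α, B ⊆ A ∧ MeasurableSet B ∧ 0 < μ B ∧ μ B < μ A

namespace Atomless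

variable {α : Type*} [MeasurableSpace α] {μ : Measure α} [IsFiniteMeasure μ] {S : Set α}

theorem exists_subset_measure_pos_le_half (hμ : Atomless μ) (hS : MeasurableSet S)
    (h0 : 0 < μ S) : ∃ T ⊆ S, MeasurableSet T ∧ 0 < μ T ∧ μ T ≤ μ S / 2 := by
  obtain ⟨B, hBS, hB, hB0, hBS'⟩ := hμ S hS h0
  have hsum : μ B + μ (S \ B) = μ S := by
    rw [measure_add_sdiff hB.nullMeasurableSet, union_eq_right.2 hBS]
  rcases le_or_gt (μ B) (μ S / 2) with h | h
  · exact ⟨B, hBS, hB, hB0, h⟩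
  refine ⟨S \ B, sdiff_subset, hS.diff hB, ?_, ?_⟩
  · rw [measure_sdiff hBS hB.nullMeasurableSet (measure_ne_top μ B)]
    exact tsub_pos_of_lt hBS'
  · refine le_of_not_gt fun h' => (ENNReal.add_lt_add h h').ne' ?_
    rw [hsum, ENNReal.add_halves]

theorem exists_subset_measure_pos_lt (hμ : Atomless μ) (hS : MeasurableSet S) (h0 : 0 < μ S)
    {ε : ℝ≥0∞} (hε : 0 < ε) : ∃ T ⊆ S, MeasurableSet T ∧ 0 < μ T ∧ μ T < ε := by
  have halving : ∀ n : ℕ, ∃ T ⊆ S, MeasurableSet T ∧ 0 < μ T ∧ μ T ≤ μ S * 2⁻¹ ^ n := by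
    intro n
    induction n with
    | zero => exact ⟨S, subset_rfl, hS, h0, by simp⟩
    | succ n ih =>
      obtain ⟨T, hTS, hT, hT0, hTn⟩ := ih
      obtain ⟨T', hT'T, hT', hT'0, hT'half⟩ := hμ.exists_subset_measure_pos_le_half hT hT0
      refine ⟨T', hT'T.trans hTS, hT', hT'0, hT'half.trans ?_⟩
      rw [pow_succ, ← mul_assoc, ← div_eq_mul_inv]
      gcongr
  have hlim : Tendsto (fun n : ℕ => μ S * 2⁻¹ ^ n) atTop (𝓝 0) := by
    simpa using ENNReal.Tendsto.const_mul
      (ENNReal.tendsto_pow_atTop_nhds_zero_of_lt_one (ENNReal.inv_lt_one.2 ENNReal.one_lt_two))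
      (Or.inr (measure_ne_top μ S))
  obtain ⟨n, hn⟩ := ((tendsto_order.1 hlim).2 ε hε).exists
  obtain ⟨T, hTS, hT, hT0, hTn⟩ := halving n
  exact ⟨T, hTS, hT, hT0, hTn.trans_lt hn⟩

theorem exists_subset_measure_eq (hμ : Atomless μ) (hS : MeasurableSet S) {r : ℝ≥0∞}
    (hr : r ≤ μ S) : ∃ T ⊆ S, MeasurableSet T ∧ μ T = r := by
  obtain ⟨T, hTS, hT, hTr, hsat⟩ := exists_saturated_subset (μ := μ) S r
  refine ⟨T, hTS, hT, le_antisymm hTr (le_of_not_gt fun hlt => ?_)⟩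
  have hgap : 0 < μ (S \ T) := by
    rw [measure_sdiff hTS hT.nullMeasurableSet (measure_ne_top _ _)]
    exact tsub_pos_of_lt (hlt.trans_le hr)
  obtain ⟨D, hDS, hD, hD0, hDr⟩ :=
    hμ.exists_subset_measure_pos_lt (hS.diff hT) hgap (tsub_pos_of_lt hlt)
  have hfits : μ T + μ D ≤ r := by
    simpa only [add_tsub_cancel_of_le hTr] using add_le_add_right hDr.le (μ T)
  exact hD0.ne' (hsat D hDS hD hfits)

end Atomless

theorem Nat.floor_mul_two_pow_le {t : ℝ} (ht : t ≤ 1) (n : ℕ) : ⌊t * 2 ^ n⌋₊ ≤ 2 ^ n := by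
  apply Nat.floor_le_of_le
  push_cast
  nlinarith [pow_pos (two_pos (α := ℝ)) n]

theorem Nat.two_mul_floor_mul_two_pow_le {t : ℝ} (ht : 0 ≤ t) (n : ℕ) :
    2 * ⌊t * 2 ^ n⌋₊ ≤ ⌊t * 2 ^ (n + 1)⌋₊ := by
  apply Nat.le_floor
  push_cast
  rw [pow_succ, ← mul_assoc, mul_comm _ (2 : ℝ)]
  exact mul_le_mul_of_nonneg_left (Nat.floor_le (by positivity)) two_pos.le

theorem tendsto_floor_mul_two_pow_div {t : ℝ} (ht : 0 ≤ t) :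
    Tendsto (fun n : ℕ => (⌊t * 2 ^ n⌋₊ : ℝ) / 2 ^ n) atTop (𝓝 t) :=
  (tendsto_nat_floor_mul_div_atTop ht).comp (tendsto_pow_atTop_atTop_of_one_lt one_lt_two)

structure Bisection {α : Type*} [MeasurableSpace α] (μ : Measure α) where
  half : Set α → Set α
  half_subset (S : Set α) : half S ⊆ S
  measurableSet_half {S : Set α} : MeasurableSet S → MeasurableSet (half S)
  measure_half {S : Set α} : MeasurableSet S → μ (half S) = μ S / 2

open Classical in
noncomputable def Atomless.bisection {α : Type*} [MeasurableSpace α] {μ : Measure α}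
    [IsFiniteMeasure μ] (hμ : Atomless μ) : Bisection μ where
  half S := if hS : MeasurableSet S then
    (hμ.exists_subset_measure_eq hS ENNReal.half_le_self).choose else ∅
  half_subset S := by
    split_ifs with hS
    · exact (hμ.exists_subset_measure_eq hS ENNReal.half_le_self).choose_spec.1
    · exact empty_subset S
  measurableSet_half hS := by
    rw [dif_pos hS]
    exact (hμ.exists_subset_measure_eq hS ENNReal.half_le_self).choose_spec.2.1
  measure_half hS := by
    rw [dif_pos hS]
    exact (hμ.exists_subset_measure_eq hS ENNReal.half_le_self).choose_spec.2.2

namespace Bisection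

variable {α : Type*} [MeasurableSpace α] {μ : Measure α} (b : Bisection μ)

open Classical in
noncomputable def bit (S : Set α) (x : α) : ℕ := if x ∈ b.half S then 0 else 1

theorem bit_lt_two (S : Set α) (x : α) : b.bit S x < 2 := by
  unfold bit; split_ifs <;> norm_num

theorem inter_bit_preimage_zero (S : Set α) : S ∩ b.bit S ⁻¹' {0} = b.half S := by
  ext x
  by_cases hx : x ∈ b.half S
  · simp [bit, hx, b.half_subset S hx]
  · simp [bit, hx]

theorem inter_bit_preimage_one (S : Set α) : S ∩ b.bit S ⁻¹' {1} = S \ b.half S := by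
  ext x
  by_cases hx : x ∈ b.half S <;> simp [bit, hx]

theorem measurable_bit {S : Set α} (hS : MeasurableSet S) : Measurable (b.bit S) :=
  Measurable.ite (b.measurableSet_half hS) measurable_const measurable_const

theorem measure_inter_bit_preimage [IsFiniteMeasure μ] {S : Set α} (hS : MeasurableSet S)
    {k : ℕ} (hk : k < 2) : μ (S ∩ b.bit S ⁻¹' {k}) = μ S / 2 := by
  interval_cases k
  · rw [inter_bit_preimage_zero, b.measure_half hS]
  · rw [inter_bit_preimage_one, measure_sdiff (b.half_subset S)
      (b.measurableSet_half hS).nullMeasurableSet (measure_ne_top _ _), b.measure_half hS,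
      ENNReal.sub_half (measure_ne_top _ _)]

noncomputable def refine {β : Type*} (f : α → β) (x : α) : β × ℕ :=
  (f x, b.bit (f ⁻¹' {f x}) x)

variable {β : Type*} {f : α → β}

@[simp]
theorem refine_fst (f : α → β) (x : α) : (b.refine f x).1 = f x := rfl

theorem refine_snd_lt_two (f : α → β) (x : α) : (b.refine f x).2 < 2 := b.bit_lt_two _ x

theorem refine_preimage_singleton (y : β) (k : ℕ) :
    b.refine f ⁻¹' {(y, k)} = f ⁻¹' {y} ∩ b.bit (f ⁻¹' {y}) ⁻¹' {k} := by
  ext x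
  simp only [refine, mem_preimage, mem_singleton_iff, mem_inter_iff, Prod.mk.injEq]
  constructor <;> rintro ⟨rfl, h⟩ <;> exact ⟨rfl, h⟩

theorem measurableSet_refine_preimage (hf : ∀ y, MeasurableSet (f ⁻¹' {y})) (p : β × ℕ) :
    MeasurableSet (b.refine f ⁻¹' {p}) := by
  rw [refine_preimage_singleton]
  exact (hf p.1).inter (b.measurable_bit (hf p.1) (measurableSet_singleton p.2))

theorem measure_refine_preimage [IsFiniteMeasure μ] (hf : ∀ y, MeasurableSet (f ⁻¹' {y}))
    (y : β) {k : ℕ} (hk : k < 2) : μ (b.refine f ⁻¹' {(y, k)}) = μ (f ⁻¹' {y}) / 2 := by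
  rw [refine_preimage_singleton, b.measure_inter_bit_preimage (hf y) hk]

/-- Level `n` labels each point by one of `4 ^ n` cells `(i, j)`, `i, j < 2 ^ n`; the cells of
level `n + 1` inside `(i, j)` are its quarters `(2 i + a, 2 j + c)`, `a, c ∈ {0, 1}`. -/
noncomputable def grid : ℕ → α → ℕ × ℕ
  | 0 => fun _ => (0, 0)
  | n + 1 => fun x =>
    let q := b.refine (b.refine (grid n)) x
    (2 * q.1.1.1 + q.1.2, 2 * q.1.1.2 + q.2)

theorem grid_succ_div_two (n : ℕ) (x : α) :
    (b.grid (n + 1) x).1 / 2 = (b.grid n x).1 ∧ (b.grid (n + 1) x).2 / 2 = (b.grid n x).2 := by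
  have ha := b.refine_snd_lt_two (b.grid n) x
  have hc := b.refine_snd_lt_two (b.refine (b.grid n)) x
  simp only [grid, refine_fst]
  omega

theorem grid_succ_preimage_singleton (n i j : ℕ) :
    b.grid (n + 1) ⁻¹' {(i, j)} =
      b.refine (b.refine (b.grid n)) ⁻¹' {(((i / 2, j / 2), i % 2), j % 2)} := by
  ext x
  have ha := b.refine_snd_lt_two (b.grid n) x
  have hc := b.refine_snd_lt_two (b.refine (b.grid n)) x
  simp only [grid, mem_preimage, mem_singleton_iff, Prod.ext_iff, refine_fst]
  omega

theorem measurableSet_grid_preimage (n : ℕ) (p : ℕ × ℕ) : MeasurableSet (b.grid n ⁻¹' {p}) := by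
  induction n generalizing p with
  | zero => exact measurable_const (measurableSet_singleton p)
  | succ n ih =>
    rw [grid_succ_preimage_singleton]
    exact b.measurableSet_refine_preimage (b.measurableSet_refine_preimage ih) _

theorem measure_grid_preimage [IsFiniteMeasure μ] {n i j : ℕ} (hi : i < 2 ^ n) (hj : j < 2 ^ n) :
    μ (b.grid n ⁻¹' {(i, j)}) = μ univ / 4 ^ n := by
  induction n generalizing i j with
  | zero =>
    obtain ⟨rfl, rfl⟩ : i = 0 ∧ j = 0 := by simp_all
    simp [grid]
  | succ n ih =>
    have hi' : i / 2 < 2 ^ n := Nat.div_lt_of_lt_mul (by rwa [← pow_succ'])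
    have hj' : j / 2 < 2 ^ n := Nat.div_lt_of_lt_mul (by rwa [← pow_succ'])
    rw [grid_succ_preimage_singleton,
      b.measure_refine_preimage (b.measurableSet_refine_preimage (b.measurableSet_grid_preimage n))
        _ (Nat.mod_lt j two_pos),
      b.measure_refine_preimage (b.measurableSet_grid_preimage n) _ (Nat.mod_lt i two_pos),
      ih hi' hj', div_eq_mul_inv, div_eq_mul_inv, div_eq_mul_inv, div_eq_mul_inv, mul_assoc,
      mul_assoc, ← ENNReal.mul_inv (by simp) (by simp), ← ENNReal.mul_inv (by simp) (by simp),
      pow_succ]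
    norm_num

def box (n k l : ℕ) : Set α := {x | (b.grid n x).1 < k ∧ (b.grid n x).2 < l}

theorem box_inter_box (n k l k' l' : ℕ) :
    b.box n k l ∩ b.box n k' l' = b.box n (min k k') (min l l') := by
  ext x
  simp only [box, mem_inter_iff, mem_ofPred_eq, lt_min_iff]
  tauto

theorem box_mono {n k l k' l' : ℕ} (hk : k ≤ k') (hl : l ≤ l') : b.box n k l ⊆ b.box n k' l' :=
  fun _ hx => ⟨hx.1.trans_le hk, hx.2.trans_le hl⟩

theorem box_eq_box_succ (n k l : ℕ) : b.box n k l = b.box (n + 1) (2 * k) (2 * l) := by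
  ext x
  obtain ⟨h1, h2⟩ := b.grid_succ_div_two n x
  simp only [box, mem_ofPred_eq, ← h1, ← h2]
  omega

theorem box_zero_one_one : b.box 0 1 1 = univ := by
  simp [box, grid]

theorem measurableSet_box (n k l : ℕ) : MeasurableSet (b.box n k l) := by
  have : b.box n k l = b.grid n ⁻¹' (Iio k ×ˢ Iio l) := rfl
  rw [this, ← Set.biUnion_preimage_singleton]
  exact .biUnion (to_countable _) fun p _ => b.measurableSet_grid_preimage n p

theorem measure_box [IsFiniteMeasure μ] {n k l : ℕ} (hk : k ≤ 2 ^ n) (hl : l ≤ 2 ^ n) :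
    μ (b.box n k l) = ENNReal.ofReal (k / 2 ^ n * (l / 2 ^ n)) * μ univ := by
  have hbox : b.box n k l = b.grid n ⁻¹' ↑(Finset.range k ×ˢ Finset.range l) := by
    ext x
    simp [box]
  have hcell : ∀ p ∈ Finset.range k ×ˢ Finset.range l, μ (b.grid n ⁻¹' {p}) = μ univ / 4 ^ n := by
    intro p hp
    simp only [Finset.mem_product, Finset.mem_range] at hp
    exact b.measure_grid_preimage (hp.1.trans_le hk) (hp.2.trans_le hl)
  have hreal : (k / 2 ^ n * (l / 2 ^ n) : ℝ) = (k * l : ℕ) / 4 ^ n := by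
    rw [div_mul_div_comm, ← mul_pow]
    norm_num
  rw [hbox, ← sum_measure_preimage_singleton _ fun p _ => b.measurableSet_grid_preimage n p,
    Finset.sum_congr rfl hcell, Finset.sum_const, Finset.card_product, Finset.card_range,
    Finset.card_range, nsmul_eq_mul, hreal, ENNReal.ofReal_div_of_pos (by positivity),
    ENNReal.ofReal_natCast, ENNReal.ofReal_pow (by norm_num), ENNReal.ofReal_ofNat, div_eq_mul_inv,
    div_eq_mul_inv]
  ring

theorem monotone_box {k l : ℕ → ℕ} (hk : ∀ n, 2 * k n ≤ k (n + 1))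
    (hl : ∀ n, 2 * l n ≤ l (n + 1)) : Monotone fun n => b.box n (k n) (l n) :=
  monotone_nat_of_le_succ fun n => (b.box_eq_box_succ n _ _).trans_subset (b.box_mono (hk n) (hl n))

theorem measure_iUnion_box_floor [IsFiniteMeasure μ] {s t : ℝ} (hs : s ∈ Icc (0 : ℝ) 1)
    (ht : t ∈ Icc (0 : ℝ) 1) :
    μ (⋃ n, b.box n ⌊s * 2 ^ n⌋₊ ⌊t * 2 ^ n⌋₊) = ENNReal.ofReal (s * t) * μ univ := by
  refine tendsto_nhds_unique (tendsto_measure_iUnion_atTop (b.monotone_box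
    (Nat.two_mul_floor_mul_two_pow_le hs.1) (Nat.two_mul_floor_mul_two_pow_le ht.1))) ?_
  have hlim := ENNReal.Tendsto.mul_const ((ENNReal.continuous_ofReal.tendsto _).comp
    ((tendsto_floor_mul_two_pow_div hs.1).mul (tendsto_floor_mul_two_pow_div ht.1)))
    (Or.inr (measure_ne_top μ univ))
  refine hlim.congr fun n => ?_
  exact (b.measure_box (Nat.floor_mul_two_pow_le hs.2 n) (Nat.floor_mul_two_pow_le ht.2 n)).symm

noncomputable def fstSublevel (t : ℝ) : Set α := ⋃ n, b.box n ⌊t * 2 ^ n⌋₊ (2 ^ n)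

noncomputable def sndSublevel (t : ℝ) : Set α := ⋃ n, b.box n (2 ^ n) ⌊t * 2 ^ n⌋₊

theorem monotone_fstSublevel : Monotone b.fstSublevel := fun _ _ hst =>
  iUnion_mono fun n => b.box_mono (Nat.floor_le_floor (by gcongr)) le_rfl

theorem monotone_sndSublevel : Monotone b.sndSublevel := fun _ _ hst =>
  iUnion_mono fun n => b.box_mono le_rfl (Nat.floor_le_floor (by gcongr))

theorem measurableSet_fstSublevel (t : ℝ) : MeasurableSet (b.fstSublevel t) :=
  .iUnion fun n => b.measurableSet_box n _ _

theorem measurableSet_sndSublevel (t : ℝ) : MeasurableSet (b.sndSublevel t) :=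
  .iUnion fun n => b.measurableSet_box n _ _

theorem fstSublevel_one : b.fstSublevel 1 = univ := by
  refine eq_univ_of_univ_subset ?_
  rw [← b.box_zero_one_one]
  exact subset_iUnion_of_subset 0 (by simp)

theorem sndSublevel_one : b.sndSublevel 1 = univ := by
  refine eq_univ_of_univ_subset ?_
  rw [← b.box_zero_one_one]
  exact subset_iUnion_of_subset 0 (by simp)

theorem fstSublevel_inter_sndSublevel {s t : ℝ} (hs : s ∈ Icc (0 : ℝ) 1) (ht : t ∈ Icc (0 : ℝ) 1) :
    b.fstSublevel s ∩ b.sndSublevel t = ⋃ n, b.box n ⌊s * 2 ^ n⌋₊ ⌊t * 2 ^ n⌋₊ := by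
  have hpow (n : ℕ) : 2 * 2 ^ n ≤ 2 ^ (n + 1) := (pow_succ' 2 n).ge
  rw [fstSublevel, sndSublevel, ← iUnion_inter_of_monotone
    (b.monotone_box (Nat.two_mul_floor_mul_two_pow_le hs.1) hpow)
    (b.monotone_box hpow (Nat.two_mul_floor_mul_two_pow_le ht.1))]
  refine iUnion_congr fun n => ?_
  rw [box_inter_box, min_eq_left (Nat.floor_mul_two_pow_le hs.2 n),
    min_eq_right (Nat.floor_mul_two_pow_le ht.2 n)]

theorem measure_fstSublevel_inter_sndSublevel [IsFiniteMeasure μ] {s t : ℝ}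
    (hs : s ∈ Icc (0 : ℝ) 1) (ht : t ∈ Icc (0 : ℝ) 1) :
    μ (b.fstSublevel s ∩ b.sndSublevel t) = ENNReal.ofReal (s * t) * μ univ := by
  rw [b.fstSublevel_inter_sndSublevel hs ht, b.measure_iUnion_box_floor hs ht]

theorem measure_fstSublevel [IsFiniteMeasure μ] {t : ℝ} (ht : t ∈ Icc (0 : ℝ) 1) :
    μ (b.fstSublevel t) = ENNReal.ofReal t * μ univ := by
  simpa [sndSublevel_one] using b.measure_fstSublevel_inter_sndSublevel ht ⟨zero_le_one, le_rfl⟩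

theorem measure_sndSublevel [IsFiniteMeasure μ] {t : ℝ} (ht : t ∈ Icc (0 : ℝ) 1) :
    μ (b.sndSublevel t) = ENNReal.ofReal t * μ univ := by
  simpa [fstSublevel_one] using b.measure_fstSublevel_inter_sndSublevel ⟨zero_le_one, le_rfl⟩ ht

end Bisection

theorem isPiSystem_setOf_eq_of_monotoneOn {Ω ι : Type*} [LinearOrder ι] {I : Set ι}
    {A : ι → Set Ω} (hA : MonotoneOn A I) : IsPiSystem {s | ∃ i ∈ I, s = A i} := by
  rintro _ ⟨i, hi, rfl⟩ _ ⟨j, hj, rfl⟩ -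
  rcases le_total i j with hij | hji
  · exact ⟨i, hi, inter_eq_left.2 (hA hi hj hij)⟩
  · exact ⟨j, hj, inter_eq_right.2 (hA hj hi hji)⟩

theorem ProbabilityTheory.indep_generateFrom_of_monotoneOn {Ω ι κ : Type*} [MeasurableSpace Ω]
    [LinearOrder ι] [LinearOrder κ] {μ : Measure Ω} [IsZeroOrProbabilityMeasure μ] {I : Set ι}
    {J : Set κ} {A : ι → Set Ω} {B : κ → Set Ω} (hA : MonotoneOn A I) (hB : MonotoneOn B J)
    (hAm : ∀ i ∈ I, MeasurableSet (A i)) (hBm : ∀ j ∈ J, MeasurableSet (B j))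
    (hAB : ∀ i ∈ I, ∀ j ∈ J, μ (A i ∩ B j) = μ (A i) * μ (B j)) :
    Indep (MeasurableSpace.generateFrom {s | ∃ i ∈ I, s = A i})
      (MeasurableSpace.generateFrom {s | ∃ j ∈ J, s = B j}) μ := by
  refine IndepSets.indep' ?_ ?_ (isPiSystem_setOf_eq_of_monotoneOn hA)
    (isPiSystem_setOf_eq_of_monotoneOn hB) ((IndepSets_iff _ _ _).2 ?_)
  · rintro _ ⟨i, hi, rfl⟩
    exact hAm i hi
  · rintro _ ⟨j, hj, rfl⟩
    exact hBm j hj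
  · rintro _ _ ⟨i, hi, rfl⟩ ⟨j, hj, rfl⟩
    exact hAB i hi j hj

theorem stmt_17 {Ω : Type} [MeasurableSpace Ω] (P : Measure Ω) [IsProbabilityMeasure P]
    (hAtomless : ∀ A : Set Ω, MeasurableSet A → 0 < P A →
      ∃ B : Set Ω, B ⊆ A ∧ MeasurableSet B ∧ 0 < P B ∧ P B < P A) :
    ∃ A B : ℝ → Set Ω,
      (∀ t ∈ Set.Icc (0 : ℝ) 1, MeasurableSet (A t) ∧ MeasurableSet (B t)) ∧
      (∀ s t : ℝ, s ∈ Set.Icc (0 : ℝ) 1 → t ∈ Set.Icc (0 : ℝ) 1 → s ≤ t →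
        A s ⊆ A t ∧ B s ⊆ B t) ∧
      (∀ t ∈ Set.Icc (0 : ℝ) 1, P (A t) = ENNReal.ofReal t ∧ P (B t) = ENNReal.ofReal t) ∧
      ProbabilityTheory.Indep
        (MeasurableSpace.generateFrom {s : Set Ω | ∃ t ∈ Set.Icc (0 : ℝ) 1, s = A t})
        (MeasurableSpace.generateFrom {s : Set Ω | ∃ t ∈ Set.Icc (0 : ℝ) 1, s = B t}) P := by
  let b : Bisection P := Atomless.bisection hAtomless
  have hA (t : ℝ) (ht : t ∈ Icc (0 : ℝ) 1) : P (b.fstSublevel t) = ENNReal.ofReal t := by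
    rw [b.measure_fstSublevel ht, measure_univ, mul_one]
  have hB (t : ℝ) (ht : t ∈ Icc (0 : ℝ) 1) : P (b.sndSublevel t) = ENNReal.ofReal t := by
    rw [b.measure_sndSublevel ht, measure_univ, mul_one]
  refine ⟨b.fstSublevel, b.sndSublevel,
    fun t _ => ⟨b.measurableSet_fstSublevel t, b.measurableSet_sndSublevel t⟩,
    fun s t _ _ hst => ⟨b.monotone_fstSublevel hst, b.monotone_sndSublevel hst⟩,
    fun t ht => ⟨hA t ht, hB t ht⟩, ?_⟩
  refine ProbabilityTheory.indep_generateFrom_of_monotoneOn (b.monotone_fstSublevel.monotoneOn _)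
    (b.monotone_sndSublevel.monotoneOn _) (fun t _ => b.measurableSet_fstSublevel t)
    (fun t _ => b.measurableSet_sndSublevel t) fun s hs t ht => ?_
  rw [b.measure_fstSublevel_inter_sndSublevel hs ht, hA s hs, hB t ht, measure_univ, mul_one,
    ENNReal.ofReal_mul hs.1]
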